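/- Let (f_q, f_*) be jointly Gaussian with means μ_q, μ_*, variances σ_q², σ_*² > 0 and covariance σ_{q*}, and let y_* be Bernoulli with P(y_* = 1 | f_*) = Φ(f_*). Then P(f_q ≤ γ | y_* = 0) = (Φ(b_q) − Z) / Φ(−a_*), where Z = BvN(a_*, b_q; −σ_{q*}/(σ_q√(1+σ_*²))), a_* = μ_*/√(1+σ_*²), and b_q = (γ−μ_q)/σ_q. -/

import Mathlib

open MeasureTheory Real

/-- Standard normal density. -/
noncomputable def stdPdf (x : ℝ) : ℝ := (Real.sqrt (2 * Real.pi))⁻¹ * Real.exp (-x ^ 2 / 2)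

/-- Standard normal CDF. -/
noncomputable def stdCdf (t : ℝ) : ℝ := ∫ s in Set.Iic t, stdPdf s

/-- Owen's T function. -/
noncomputable def owenT (h a : ℝ) : ℝ :=
  (2 * Real.pi)⁻¹ * ∫ x in (0:ℝ)..a, Real.exp (-h ^ 2 * (1 + x ^ 2) / 2) / (1 + x ^ 2)

/-- Standard bivariate normal density with correlation ρ. -/
noncomputable def bvnPdf (ρ x y : ℝ) : ℝ :=
  Real.exp (-(x ^ 2 - 2 * ρ * x * y + y ^ 2) / (2 * (1 - ρ ^ 2))) /
    (2 * Real.pi * Real.sqrt (1 - ρ ^ 2))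

/-- Standard bivariate normal CDF with correlation ρ. -/
noncomputable def bvn (u v ρ : ℝ) : ℝ :=
  ∫ p : ℝ × ℝ in Set.Iic u ×ˢ Set.Iic v, bvnPdf ρ p.1 p.2

/-- General bivariate Gaussian density with means μ₁ μ₂, std devs σ₁ σ₂, covariance σ₁₂. -/
noncomputable def biGaussPdf (μ₁ μ₂ σ₁ σ₂ σ₁₂ x y : ℝ) : ℝ :=
  Real.exp (-(σ₂ ^ 2 * (x - μ₁) ^ 2 - 2 * σ₁₂ * (x - μ₁) * (y - μ₂) + σ₁ ^ 2 * (y - μ₂) ^ 2) /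
      (2 * (σ₁ ^ 2 * σ₂ ^ 2 - σ₁₂ ^ 2))) /
    (2 * Real.pi * Real.sqrt (σ₁ ^ 2 * σ₂ ^ 2 - σ₁₂ ^ 2))

open Set ProbabilityTheory
open scoped NNReal

/-! Write `1 - Φ(f_*) = Φ(-f_*)` and factor the bivariate density into a marginal and a Gaussian
conditional. Everything then reduces to the probit–Gaussian identity
`∫ Φ(-y) N(y; m, v) dy = Φ(-m / √(1 + v))`, i.e. `P(Z + Y ≤ 0)` for independent `Z ~ N(0, 1)` and
`Y ~ N(m, v)`, which follows from Fubini and the product formula for Gaussian densities.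
Conditioning `f_q` on `f_*` gives the denominator. Conditioning `f_*` on `f_q` and standardising
`f_q` turns the numerator into `∫_{u ≤ b} φ(u) Φ((ρ u - a) / √(1 - ρ²)) du`, which is
`Φ(b) - BvN(a, b; ρ)` by the same conditional decomposition of the standard bivariate normal. -/

section Tonelli

variable {α β : Type*} [MeasurableSpace α] [MeasurableSpace β] {μ : Measure α} {ν : Measure β}
  [SFinite ν]

theorem integrable_prod_of_nonneg {f : α × β → ℝ} (hf : AEStronglyMeasurable f (μ.prod ν))
    (hf_nonneg : 0 ≤ f) (h_section : ∀ x, Integrable (fun y => f (x, y)) ν)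
    (h_integral : Integrable (fun x => ∫ y, f (x, y) ∂ν) μ) : Integrable f (μ.prod ν) := by
  refine (integrable_prod_iff hf).2 ⟨ae_of_all _ h_section, ?_⟩
  simpa only [Real.norm_of_nonneg (hf_nonneg _)] using h_integral

theorem integrable_prod_of_nonneg' [SFinite μ] {f : α × β → ℝ}
    (hf : AEStronglyMeasurable f (μ.prod ν)) (hf_nonneg : 0 ≤ f)
    (h_section : ∀ y, Integrable (fun x => f (x, y)) μ)
    (h_integral : Integrable (fun y => ∫ x, f (x, y) ∂μ) ν) : Integrable f (μ.prod ν) := by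
  refine (integrable_prod_iff' hf).2 ⟨ae_of_all _ h_section, ?_⟩
  simpa only [Real.norm_of_nonneg (hf_nonneg _)] using h_integral

end Tonelli

theorem stdPdf_eq_gaussianPDFReal : stdPdf = gaussianPDFReal 0 1 := by
  ext x
  simp [stdPdf, gaussianPDFReal]

theorem stdPdf_nonneg (x : ℝ) : 0 ≤ stdPdf x :=
  stdPdf_eq_gaussianPDFReal ▸ gaussianPDFReal_nonneg 0 1 x

theorem integrable_stdPdf : Integrable stdPdf :=
  stdPdf_eq_gaussianPDFReal ▸ integrable_gaussianPDFReal 0 1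

theorem integral_stdPdf : ∫ x, stdPdf x = 1 :=
  stdPdf_eq_gaussianPDFReal ▸ integral_gaussianPDFReal_eq_one 0 one_ne_zero

theorem stdCdf_nonneg (t : ℝ) : 0 ≤ stdCdf t :=
  setIntegral_nonneg measurableSet_Iic fun x _ => stdPdf_nonneg x

theorem stdCdf_le_one (t : ℝ) : stdCdf t ≤ 1 :=
  integral_stdPdf ▸ setIntegral_le_integral integrable_stdPdf (ae_of_all _ stdPdf_nonneg)

theorem norm_stdCdf_le_one (t : ℝ) : ‖stdCdf t‖ ≤ 1 := by
  rw [Real.norm_of_nonneg (stdCdf_nonneg t)]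
  exact stdCdf_le_one t

theorem monotone_stdCdf : Monotone stdCdf := fun _ _ hab =>
  setIntegral_mono_set integrable_stdPdf.integrableOn (ae_of_all _ stdPdf_nonneg)
    (Iic_subset_Iic.mpr hab).eventuallyLE

@[fun_prop]
theorem measurable_stdCdf : Measurable stdCdf := monotone_stdCdf.measurable

theorem stdCdf_neg (t : ℝ) : stdCdf (-t) = 1 - stdCdf t := by
  have h_tail : stdCdf (-t) = ∫ x in Ioi t, stdPdf x := by
    rw [stdCdf, ← integral_comp_neg_Ioi]
    simp only [stdPdf, neg_sq]
  have h_split : stdCdf t + ∫ x in Ioi t, stdPdf x = 1 := by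
    rw [← integral_stdPdf, stdCdf, ← setIntegral_union (Iic_disjoint_Ioi le_rfl)
      measurableSet_Ioi integrable_stdPdf.integrableOn integrable_stdPdf.integrableOn,
      Iic_union_Ioi, setIntegral_univ]
  linarith

theorem MeasureTheory.Integrable.stdCdf_comp_mul {α : Type*} [MeasurableSpace α] {μ : Measure α}
    {f g : α → ℝ} (hf : Measurable f) (hg : Integrable g μ) :
    Integrable (fun x => stdCdf (f x) * g x) μ :=
  hg.bdd_mul (measurable_stdCdf.comp hf).aestronglyMeasurable
    (ae_of_all _ fun _ => norm_stdCdf_le_one _)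

theorem setIntegral_Iic_comp_affine (f : ℝ → ℝ) {c : ℝ} (hc : 0 < c) (d t : ℝ) :
    ∫ x in Iic t, f x = c * ∫ u in Iic ((t - d) / c), f (c * u + d) := by
  have h_emb : MeasurableEmbedding fun u : ℝ => c * u + d :=
    (affineHomeomorph c d hc.ne').isClosedEmbedding.measurableEmbedding
  have h_map : Measure.map (fun u : ℝ => c * u + d) volume = ENNReal.ofReal c⁻¹ • volume := by
    rw [show (fun u : ℝ => c * u + d) = (· + d) ∘ (c * ·) from rfl,
      ← Measure.map_map (by fun_prop) (by fun_prop), Real.map_volume_mul_left hc.ne',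
      Measure.map_smul, map_add_right_eq_self, abs_of_pos (inv_pos.mpr hc)]
  have h_preimage : (fun u : ℝ => c * u + d) ⁻¹' Iic t = Iic ((t - d) / c) := by
    ext u
    simp only [mem_preimage, mem_Iic, le_div_iff₀ hc]
    constructor <;> intro h <;> linarith
  have := h_emb.setIntegral_map (μ := volume) f (Iic t)
  rw [h_map, h_preimage, Measure.restrict_smul, integral_smul_measure,
    ENNReal.toReal_ofReal (inv_pos.mpr hc).le] at this
  rw [← this, smul_eq_mul, ← mul_assoc, mul_inv_cancel₀ hc.ne', one_mul]

section GaussianDensity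

variable {v : ℝ≥0}

theorem gaussianPDFReal_comm (μ x : ℝ) : gaussianPDFReal μ v x = gaussianPDFReal x v μ := by
  simp only [gaussianPDFReal, sub_sq_comm x μ]

theorem sqrt_mul_gaussianPDFReal_affine (m : ℝ) (hv : v ≠ 0) (u : ℝ) :
    √v * gaussianPDFReal m v (√v * u + m) = stdPdf u := by
  have hv' : (0 : ℝ) < v := by positivity
  simp only [gaussianPDFReal, stdPdf, add_sub_cancel_right, mul_pow, Real.sq_sqrt hv'.le,
    Real.sqrt_mul (by positivity : (0 : ℝ) ≤ 2 * π)]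
  field_simp

theorem setIntegral_Iic_gaussianPDFReal_mul (m : ℝ) (hv : v ≠ 0) (f : ℝ → ℝ) (t : ℝ) :
    ∫ x in Iic t, gaussianPDFReal m v x * f x
      = ∫ u in Iic ((t - m) / √v), stdPdf u * f (√v * u + m) := by
  have hv' : (0 : ℝ) < v := by positivity
  rw [setIntegral_Iic_comp_affine _ (Real.sqrt_pos.2 hv') m t, ← integral_const_mul]
  refine setIntegral_congr_fun measurableSet_Iic fun u _ => ?_
  rw [← mul_assoc, sqrt_mul_gaussianPDFReal_affine m hv]

theorem setIntegral_Iic_gaussianPDFReal (m : ℝ) (hv : v ≠ 0) (t : ℝ) :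
    ∫ x in Iic t, gaussianPDFReal m v x = stdCdf ((t - m) / √v) := by
  simpa [stdCdf] using setIntegral_Iic_gaussianPDFReal_mul m hv (fun _ => 1) t

theorem stdCdf_neg_eq_setIntegral (y : ℝ) :
    stdCdf (-y) = ∫ t in Iic 0, gaussianPDFReal t 1 y := by
  rw [setIntegral_congr_fun measurableSet_Iic fun t _ => gaussianPDFReal_comm t y,
    setIntegral_Iic_gaussianPDFReal y one_ne_zero]
  simp

theorem gaussianPDFReal_mul_gaussianPDFReal {u : ℝ≥0} (hu : u ≠ 0) (hv : v ≠ 0) (a b y : ℝ) :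
    gaussianPDFReal a u y * gaussianPDFReal b v y
      = gaussianPDFReal b (u + v) a *
          gaussianPDFReal ((a * v + b * u) / (u + v)) (u * v / (u + v)) y := by
  have hu' : (0 : ℝ) < u := by positivity
  have hv' : (0 : ℝ) < v := by positivity
  simp only [gaussianPDFReal, NNReal.coe_add, NNReal.coe_mul, NNReal.coe_div]
  rw [mul_mul_mul_comm, mul_mul_mul_comm (√(2 * π * (u + v)))⁻¹, ← Real.exp_add, ← Real.exp_add,
    ← mul_inv, ← mul_inv, ← Real.sqrt_mul (by positivity), ← Real.sqrt_mul (by positivity)]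
  congr 2
  · field_simp
  · field_simp
    ring

theorem integral_gaussianPDFReal_mul_gaussianPDFReal {u : ℝ≥0} (hu : u ≠ 0) (hv : v ≠ 0)
    (a b : ℝ) :
    ∫ y, gaussianPDFReal a u y * gaussianPDFReal b v y = gaussianPDFReal b (u + v) a := by
  simp_rw [gaussianPDFReal_mul_gaussianPDFReal hu hv a b]
  rw [integral_const_mul, integral_gaussianPDFReal_eq_one _ (by positivity), mul_one]

end GaussianDensity

theorem integral_stdCdf_neg_mul_gaussianPDFReal (m : ℝ) {v : ℝ≥0} (hv : v ≠ 0) :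
    ∫ y, stdCdf (-y) * gaussianPDFReal m v y = stdCdf (-(m / √(1 + v))) := by
  set F : ℝ → ℝ → ℝ := fun y t => gaussianPDFReal t 1 y * gaussianPDFReal m v y
  have h_section : ∀ y, stdCdf (-y) * gaussianPDFReal m v y = ∫ t in Iic 0, F y t := fun y => by
    rw [stdCdf_neg_eq_setIntegral, integral_mul_const]
  have hF : Integrable (Function.uncurry F) (volume.prod (volume.restrict (Iic 0))) := by
    refine integrable_prod_of_nonneg ?_
      (fun _ => mul_nonneg (gaussianPDFReal_nonneg _ _ _) (gaussianPDFReal_nonneg _ _ _))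
      (fun y => ?_) ?_
    · refine Continuous.aestronglyMeasurable ?_
      unfold F gaussianPDFReal
      fun_prop
    · simp_rw [Function.uncurry_apply_pair, F, gaussianPDFReal_comm _ y]
      exact ((integrable_gaussianPDFReal y 1).mul_const _).restrict
    · simp_rw [Function.uncurry_apply_pair, ← h_section]
      exact (integrable_gaussianPDFReal m v).stdCdf_comp_mul measurable_neg
  simp_rw [h_section]
  rw [integral_integral_swap hF]
  simp_rw [F, integral_gaussianPDFReal_mul_gaussianPDFReal one_ne_zero hv]
  rw [setIntegral_Iic_gaussianPDFReal m (by positivity) 0, zero_sub, neg_div, NNReal.coe_add,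
    NNReal.coe_one]

section Bivariate

variable {μ₁ μ₂ σ₁ σ₂ σ₁₂ : ℝ}

theorem biGaussPdf_nonneg (μ₁ μ₂ σ₁ σ₂ σ₁₂ x y : ℝ) : 0 ≤ biGaussPdf μ₁ μ₂ σ₁ σ₂ σ₁₂ x y := by
  unfold biGaussPdf
  positivity

theorem biGaussPdf_comm (μ₁ μ₂ σ₁ σ₂ σ₁₂ x y : ℝ) :
    biGaussPdf μ₁ μ₂ σ₁ σ₂ σ₁₂ x y = biGaussPdf μ₂ μ₁ σ₂ σ₁ σ₁₂ y x := by
  unfold biGaussPdf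
  ring_nf

/-- Marginal density of the first coordinate times the conditional density of the second. -/
theorem biGaussPdf_eq_mul (hΔ : σ₁₂ ^ 2 < σ₁ ^ 2 * σ₂ ^ 2) (x y : ℝ) :
    biGaussPdf μ₁ μ₂ σ₁ σ₂ σ₁₂ x y =
      gaussianPDFReal μ₁ (σ₁ ^ 2).toNNReal x *
        gaussianPDFReal (μ₂ + σ₁₂ / σ₁ ^ 2 * (x - μ₁))
          ((σ₁ ^ 2 * σ₂ ^ 2 - σ₁₂ ^ 2) / σ₁ ^ 2).toNNReal y := by
  have hΔ' : 0 < σ₁ ^ 2 * σ₂ ^ 2 - σ₁₂ ^ 2 := by linarith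
  have hσ₁ : σ₁ ≠ 0 := by
    rintro rfl
    nlinarith [sq_nonneg σ₁₂]
  unfold biGaussPdf gaussianPDFReal
  rw [Real.coe_toNNReal _ (sq_nonneg σ₁), Real.coe_toNNReal _ (by positivity), div_eq_mul_inv,
    mul_comm (Real.exp _), mul_mul_mul_comm, ← Real.exp_add, ← mul_inv,
    ← Real.sqrt_mul (by positivity)]
  congr 2
  · rw [show 2 * π * σ₁ ^ 2 * (2 * π * ((σ₁ ^ 2 * σ₂ ^ 2 - σ₁₂ ^ 2) / σ₁ ^ 2))
        = (2 * π) ^ 2 * (σ₁ ^ 2 * σ₂ ^ 2 - σ₁₂ ^ 2) by field_simp,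
      Real.sqrt_mul (by positivity), Real.sqrt_sq (by positivity)]
  · rw [div_add_div _ _ (by positivity) (by positivity),
      div_eq_div_iff (by positivity) (by positivity)]
    field_simp
    ring

theorem bvnPdf_eq_mul {ρ : ℝ} (hρ : ρ ^ 2 < 1) (x y : ℝ) :
    bvnPdf ρ x y = stdPdf y * gaussianPDFReal (ρ * y) (1 - ρ ^ 2).toNNReal x := by
  have h := biGaussPdf_eq_mul (μ₁ := 0) (μ₂ := 0) (σ₁ := 1) (σ₂ := 1) (by simpa using hρ) y x
  simp only [one_pow, mul_one, div_one, sub_zero, zero_add, Real.toNNReal_one] at h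
  rw [stdPdf_eq_gaussianPDFReal, ← h, biGaussPdf_comm]
  simp [bvnPdf, biGaussPdf]

end Bivariate

theorem stdCdf_sub_bvn {ρ : ℝ} (hρ : ρ ^ 2 < 1) (a b : ℝ) :
    stdCdf b - bvn a b ρ
      = ∫ y in Iic b, stdPdf y * stdCdf ((ρ * y - a) / √(1 - ρ ^ 2)) := by
  have hw : (1 - ρ ^ 2).toNNReal ≠ 0 := by simpa using hρ
  have h_inner : ∀ y, ∫ x in Iic a, bvnPdf ρ x y
      = stdCdf ((a - ρ * y) / √(1 - ρ ^ 2)) * stdPdf y := fun y => by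
    simp_rw [bvnPdf_eq_mul hρ, integral_const_mul, setIntegral_Iic_gaussianPDFReal _ hw,
      Real.coe_toNNReal _ (sub_nonneg.2 hρ.le), mul_comm]
  have h_outer : Integrable (fun y => stdCdf ((a - ρ * y) / √(1 - ρ ^ 2)) * stdPdf y)
      (volume.restrict (Iic b)) :=
    integrable_stdPdf.restrict.stdCdf_comp_mul (by fun_prop)
  have h_int : Integrable (fun p : ℝ × ℝ => bvnPdf ρ p.1 p.2)
      ((volume.restrict (Iic a)).prod (volume.restrict (Iic b))) := by
    refine integrable_prod_of_nonneg' ?_ (fun p => ?_) (fun y => ?_) ?_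
    · exact (by unfold bvnPdf; fun_prop : Continuous _).aestronglyMeasurable
    · simp only [bvnPdf_eq_mul hρ, Pi.zero_apply]
      exact mul_nonneg (stdPdf_nonneg _) (gaussianPDFReal_nonneg _ _ _)
    · simp_rw [bvnPdf_eq_mul hρ]
      exact ((integrable_gaussianPDFReal _ _).const_mul _).restrict
    · simpa only [h_inner] using h_outer
  rw [bvn, Measure.volume_eq_prod, ← Measure.prod_restrict, integral_prod_symm _ h_int]
  simp_rw [h_inner]
  rw [stdCdf, ← integral_sub integrable_stdPdf.restrict h_outer]
  refine setIntegral_congr_fun measurableSet_Iic fun y _ => ?_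
  rw [← neg_sub a, neg_div, stdCdf_neg]
  ring

section ProbitLikelihood

variable {μ₁ μ₂ σ₁ σ₂ σ₁₂ : ℝ}

theorem measurable_one_sub_stdCdf_mul_biGaussPdf (μ₁ μ₂ σ₁ σ₂ σ₁₂ : ℝ) :
    Measurable fun p : ℝ × ℝ => (1 - stdCdf p.2) * biGaussPdf μ₁ μ₂ σ₁ σ₂ σ₁₂ p.1 p.2 := by
  unfold biGaussPdf
  fun_prop

theorem one_sub_stdCdf_mul_biGaussPdf_nonneg (μ₁ μ₂ σ₁ σ₂ σ₁₂ : ℝ) :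
    0 ≤ fun p : ℝ × ℝ => (1 - stdCdf p.2) * biGaussPdf μ₁ μ₂ σ₁ σ₂ σ₁₂ p.1 p.2 := fun _ =>
  mul_nonneg (sub_nonneg.2 (stdCdf_le_one _)) (biGaussPdf_nonneg ..)

theorem integral_one_sub_stdCdf_mul_biGaussPdf (hΔ : σ₁₂ ^ 2 < σ₁ ^ 2 * σ₂ ^ 2) :
    ∫ p : ℝ × ℝ, (1 - stdCdf p.2) * biGaussPdf μ₁ μ₂ σ₁ σ₂ σ₁₂ p.1 p.2
      = stdCdf (-(μ₂ / √(1 + σ₂ ^ 2))) := by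
  have hΔ' : σ₁₂ ^ 2 < σ₂ ^ 2 * σ₁ ^ 2 := by linarith
  have hσ₂ : 0 < σ₂ ^ 2 := by nlinarith [sq_nonneg σ₁₂, sq_nonneg σ₁]
  have hv : ((σ₂ ^ 2 * σ₁ ^ 2 - σ₁₂ ^ 2) / σ₂ ^ 2).toNNReal ≠ 0 := by
    simpa using div_pos (by linarith) hσ₂
  have h_fac : ∀ x y, (1 - stdCdf y) * biGaussPdf μ₁ μ₂ σ₁ σ₂ σ₁₂ x y
      = stdCdf (-y) * gaussianPDFReal μ₂ (σ₂ ^ 2).toNNReal y *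
        gaussianPDFReal (μ₁ + σ₁₂ / σ₂ ^ 2 * (y - μ₂))
          ((σ₂ ^ 2 * σ₁ ^ 2 - σ₁₂ ^ 2) / σ₂ ^ 2).toNNReal x := fun x y => by
    rw [biGaussPdf_comm, biGaussPdf_eq_mul hΔ', stdCdf_neg, mul_assoc]
  have h_inner : ∀ y, ∫ x, (1 - stdCdf y) * biGaussPdf μ₁ μ₂ σ₁ σ₂ σ₁₂ x y
      = stdCdf (-y) * gaussianPDFReal μ₂ (σ₂ ^ 2).toNNReal y := fun y => by
    simp_rw [h_fac _ y, integral_const_mul, integral_gaussianPDFReal_eq_one _ hv, mul_one]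
  have h_int : Integrable (fun p : ℝ × ℝ => (1 - stdCdf p.2) * biGaussPdf μ₁ μ₂ σ₁ σ₂ σ₁₂ p.1 p.2)
      (volume.prod volume) := by
    refine integrable_prod_of_nonneg'
      (measurable_one_sub_stdCdf_mul_biGaussPdf ..).aestronglyMeasurable
      (one_sub_stdCdf_mul_biGaussPdf_nonneg _ _ _ _ _) (fun y => ?_) ?_
    · simp_rw [h_fac _ y]
      exact (integrable_gaussianPDFReal _ _).const_mul _
    · simpa only [h_inner] using (integrable_gaussianPDFReal _ _).stdCdf_comp_mul measurable_neg
  rw [Measure.volume_eq_prod, integral_prod_symm _ h_int]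
  simp_rw [h_inner]
  rw [integral_stdCdf_neg_mul_gaussianPDFReal _ (by simpa using hσ₂.ne'),
    Real.coe_toNNReal _ hσ₂.le]

theorem probit_arg_conditional_eq (hσ₁ : 0 < σ₁) (hΔ : σ₁₂ ^ 2 < σ₁ ^ 2 * σ₂ ^ 2) (u : ℝ) :
    -((μ₂ + σ₁₂ / σ₁ ^ 2 * (σ₁ * u)) / √(1 + (σ₁ ^ 2 * σ₂ ^ 2 - σ₁₂ ^ 2) / σ₁ ^ 2))
      = (-σ₁₂ / (σ₁ * √(1 + σ₂ ^ 2)) * u - μ₂ / √(1 + σ₂ ^ 2)) /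
          √(1 - (-σ₁₂ / (σ₁ * √(1 + σ₂ ^ 2))) ^ 2) := by
  have hS : 0 < √(1 + σ₂ ^ 2) := Real.sqrt_pos.2 (by positivity)
  have hS2 : √(1 + σ₂ ^ 2) ^ 2 = 1 + σ₂ ^ 2 := Real.sq_sqrt (by positivity)
  have hD : 0 < σ₁ ^ 2 * (1 + σ₂ ^ 2) - σ₁₂ ^ 2 := by nlinarith
  have h_left : √(1 + (σ₁ ^ 2 * σ₂ ^ 2 - σ₁₂ ^ 2) / σ₁ ^ 2)
      = √(σ₁ ^ 2 * (1 + σ₂ ^ 2) - σ₁₂ ^ 2) / σ₁ := by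
    rw [show 1 + (σ₁ ^ 2 * σ₂ ^ 2 - σ₁₂ ^ 2) / σ₁ ^ 2
        = (σ₁ ^ 2 * (1 + σ₂ ^ 2) - σ₁₂ ^ 2) / σ₁ ^ 2 by field_simp; ring,
      Real.sqrt_div hD.le, Real.sqrt_sq hσ₁.le]
  have h_right : √(1 - (-σ₁₂ / (σ₁ * √(1 + σ₂ ^ 2))) ^ 2)
      = √(σ₁ ^ 2 * (1 + σ₂ ^ 2) - σ₁₂ ^ 2) / (σ₁ * √(1 + σ₂ ^ 2)) := by
    rw [show 1 - (-σ₁₂ / (σ₁ * √(1 + σ₂ ^ 2))) ^ 2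
        = (σ₁ ^ 2 * (1 + σ₂ ^ 2) - σ₁₂ ^ 2) / (σ₁ * √(1 + σ₂ ^ 2)) ^ 2 by
          rw [div_pow, neg_sq, mul_pow, hS2]; field_simp,
      Real.sqrt_div hD.le, Real.sqrt_sq (mul_pos hσ₁ hS).le]
  rw [h_left, h_right]
  field_simp
  ring

theorem setIntegral_one_sub_stdCdf_mul_biGaussPdf (hσ₁ : 0 < σ₁)
    (hΔ : σ₁₂ ^ 2 < σ₁ ^ 2 * σ₂ ^ 2) (γ : ℝ) :
    ∫ p : ℝ × ℝ in Iic γ ×ˢ univ, (1 - stdCdf p.2) * biGaussPdf μ₁ μ₂ σ₁ σ₂ σ₁₂ p.1 p.2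
      = stdCdf ((γ - μ₁) / σ₁) -
          bvn (μ₂ / √(1 + σ₂ ^ 2)) ((γ - μ₁) / σ₁) (-σ₁₂ / (σ₁ * √(1 + σ₂ ^ 2))) := by
  set v := ((σ₁ ^ 2 * σ₂ ^ 2 - σ₁₂ ^ 2) / σ₁ ^ 2).toNNReal
  set m : ℝ → ℝ := fun x => μ₂ + σ₁₂ / σ₁ ^ 2 * (x - μ₁)
  have hv_pos : 0 < (σ₁ ^ 2 * σ₂ ^ 2 - σ₁₂ ^ 2) / σ₁ ^ 2 := div_pos (by linarith) (by positivity)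
  have hv : v ≠ 0 := by simpa [v] using hv_pos
  have hρ : (-σ₁₂ / (σ₁ * √(1 + σ₂ ^ 2))) ^ 2 < 1 := by
    rw [div_pow, neg_sq, mul_pow, Real.sq_sqrt (by positivity), div_lt_one (by positivity)]
    nlinarith
  have h_inner : ∀ x, ∫ y, (1 - stdCdf y) * biGaussPdf μ₁ μ₂ σ₁ σ₂ σ₁₂ x y
      = gaussianPDFReal μ₁ (σ₁ ^ 2).toNNReal x * stdCdf (-(m x / √(1 + v))) := fun x => by
    simp_rw [biGaussPdf_eq_mul hΔ, ← stdCdf_neg, mul_left_comm (stdCdf _), integral_const_mul]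
    rw [integral_stdCdf_neg_mul_gaussianPDFReal _ hv]
  have h_int : Integrable (fun p : ℝ × ℝ => (1 - stdCdf p.2) * biGaussPdf μ₁ μ₂ σ₁ σ₂ σ₁₂ p.1 p.2)
      ((volume.restrict (Iic γ)).prod volume) := by
    refine integrable_prod_of_nonneg
      (measurable_one_sub_stdCdf_mul_biGaussPdf ..).aestronglyMeasurable
      (one_sub_stdCdf_mul_biGaussPdf_nonneg _ _ _ _ _) (fun x => ?_) ?_
    · simp_rw [biGaussPdf_eq_mul hΔ, ← stdCdf_neg, mul_left_comm (stdCdf _)]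
      exact ((integrable_gaussianPDFReal _ _).stdCdf_comp_mul measurable_neg).const_mul _
    · simpa only [h_inner] using (integrable_gaussianPDFReal _ _).restrict.mul_bdd
        (by fun_prop : Measurable fun x => stdCdf (-(m x / √(1 + v)))).aestronglyMeasurable
        (ae_of_all _ fun _ => norm_stdCdf_le_one _)
  rw [Measure.volume_eq_prod, ← Measure.prod_restrict, Measure.restrict_univ,
    integral_prod _ h_int]
  simp_rw [h_inner]
  rw [setIntegral_Iic_gaussianPDFReal_mul _ (by simpa using hσ₁.ne'), stdCdf_sub_bvn hρ,
    Real.coe_toNNReal _ (sq_nonneg _), Real.sqrt_sq hσ₁.le]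
  refine setIntegral_congr_fun measurableSet_Iic fun u _ => ?_
  simp only [m, v, add_sub_cancel_right, Real.coe_toNNReal _ hv_pos.le]
  rw [probit_arg_conditional_eq hσ₁ hΔ]

end ProbitLikelihood

theorem stmt_8_general (μq μs σq σs σqs γ : ℝ) (hq : 0 < σq)
    (hcov : σqs ^ 2 < σq ^ 2 * σs ^ 2) :
    (∫ p : ℝ × ℝ in Set.Iic γ ×ˢ Set.univ,
          (1 - stdCdf p.2) * biGaussPdf μq μs σq σs σqs p.1 p.2) /
        (∫ p : ℝ × ℝ, (1 - stdCdf p.2) * biGaussPdf μq μs σq σs σqs p.1 p.2) =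
      (stdCdf ((γ - μq) / σq) -
          bvn (μs / Real.sqrt (1 + σs ^ 2)) ((γ - μq) / σq)
            (-σqs / (σq * Real.sqrt (1 + σs ^ 2)))) /
        stdCdf (-(μs / Real.sqrt (1 + σs ^ 2))) := by
  rw [setIntegral_one_sub_stdCdf_mul_biGaussPdf hq hcov,
    integral_one_sub_stdCdf_mul_biGaussPdf hcov]

theorem stmt_8 (μq μs σq σs σqs γ : ℝ) (hq : 0 < σq) (hs : 0 < σs)
    (hcov : σqs ^ 2 < σq ^ 2 * σs ^ 2) :
    (∫ p : ℝ × ℝ in Set.Iic γ ×ˢ Set.univ,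
          (1 - stdCdf p.2) * biGaussPdf μq μs σq σs σqs p.1 p.2) /
        (∫ p : ℝ × ℝ, (1 - stdCdf p.2) * biGaussPdf μq μs σq σs σqs p.1 p.2) =
      (stdCdf ((γ - μq) / σq) -
          bvn (μs / Real.sqrt (1 + σs ^ 2)) ((γ - μq) / σq)
            (-σqs / (σq * Real.sqrt (1 + σs ^ 2)))) /
        stdCdf (-(μs / Real.sqrt (1 + σs ^ 2))) :=
  stmt_8_general μq μs σq σs σqs γ hq hcov
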